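/- arXiv:2207.07057 — 3 statements merged into one kernel-verified Lean document; each statement's English description precedes it below -/
import Mathlib

section
/- Bol's identity: for an integer k ≥ 2, any γ ∈ SL₂(ℝ), and any smooth (holomorphic) function f on the upper half-plane, D^{k-1}(f |_{2-k} γ) = (D^{k-1} f) |_k γ, where |_k denotes the weight-k slash action (f|_kγ)(z) = (cz+d)^{-k} f(γz) and D^{k-1} = (2πi)^{1-k} d^{k-1}/dz^{k-1}. -/
set_option autoImplicit false

open Complex Real Set

/-! Write `u = cz + d` and `γz = (az + b)/(cz + d)`, so that `u' = c` and `(γz)' = u⁻²`.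
By induction on `m`, `D^{m+1}(u^m · g∘γ) = u^{-(m+2)} · g^{(m+1)}∘γ`: Leibniz's rule for the
affine factor in `u^{m+1} · g∘γ = u · (u^m · g∘γ)` gives
`D^{m+2}(u^{m+1} · g∘γ) = u · D^{m+2}(u^m · g∘γ) + (m+2) c · D^{m+1}(u^m · g∘γ)`,
and differentiating the induction hypothesis once more, the two terms in `g^{(m+1)}∘γ` cancel.
Bol's identity is the case `m = k - 2`. -/

theorem iteratedDeriv_succ_affine_mul {𝕜 : Type*} [NontriviallyNormedField 𝕜] {φ : 𝕜 → 𝕜}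
    {x : 𝕜} (c d : 𝕜) (n : ℕ) (hφ : ContDiffAt 𝕜 (n + 1) φ x) :
    iteratedDeriv (n + 1) (fun w => (c * w + d) * φ w) x
      = (c * x + d) * iteratedDeriv (n + 1) φ x + (n + 1) * c * iteratedDeriv n φ x := by
  have hderiv : deriv (fun w => c * w + d) = fun _ => c := by
    funext w; simp
  have hhigher (i : ℕ) : iteratedDeriv (i + 2) (fun w => c * w + d) x = 0 := by
    rw [iteratedDeriv_succ', iteratedDeriv_succ', hderiv, deriv_const',
      iteratedDeriv_fun_const_zero]
  rw [iteratedDeriv_fun_mul (by fun_prop) hφ, Finset.sum_range_succ', Finset.sum_range_succ',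
    Finset.sum_eq_zero fun i _ => by rw [hhigher, mul_zero, zero_mul]]
  simp only [zero_add, Nat.choose_one_right, Nat.cast_add, Nat.cast_one, iteratedDeriv_succ,
    iteratedDeriv_zero, hderiv, add_tsub_cancel_right, Nat.choose_zero_right, one_mul, tsub_zero]
  ring

theorem DifferentiableOn.hasDerivAt_iteratedDeriv {g : ℂ → ℂ} {t : Set ℂ}
    (hg : DifferentiableOn ℂ g t) (ht : IsOpen t) (i : ℕ) {x : ℂ} (hx : x ∈ t) :
    HasDerivAt (iteratedDeriv i g) (iteratedDeriv (i + 1) g x) x := by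
  rw [iteratedDeriv_succ, iteratedDeriv_eq_iterate]
  exact ((hg.analyticOnNhd ht).iterated_deriv i x hx).differentiableAt.hasDerivAt

section Mobius

variable {a b c d : ℂ}

theorem hasDerivAt_mobius (hdet : a * d - b * c = 1) {z : ℂ} (hz : c * z + d ≠ 0) :
    HasDerivAt (fun w => (a * w + b) / (c * w + d)) ((c * z + d) ^ (-2 : ℤ)) z := by
  refine ((((hasDerivAt_id' z).const_mul a).add_const b).div
    (((hasDerivAt_id' z).const_mul c).add_const d) hz).congr_deriv ?_
  rw [zpow_neg, zpow_ofNat]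
  field_simp
  linear_combination hdet

theorem hasDerivAt_zpow_mul_comp_mobius (hdet : a * d - b * c = 1) {z : ℂ} (hz : c * z + d ≠ 0)
    (k : ℤ) {G : ℂ → ℂ} {G' : ℂ}
    (hG : HasDerivAt G G' ((a * z + b) / (c * z + d))) :
    HasDerivAt (fun w => (c * w + d) ^ k * G ((a * w + b) / (c * w + d)))
      (k * c * (c * z + d) ^ (k - 1) * G ((a * z + b) / (c * z + d))
        + (c * z + d) ^ (k - 2) * G') z := by
  have hu : HasDerivAt (fun w => c * w + d) c z := by
    simpa using ((hasDerivAt_id' z).const_mul c).add_const d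
  refine (((hasDerivAt_zpow k _ (Or.inl hz)).comp z hu).mul
    (hG.comp z (hasDerivAt_mobius hdet hz))).congr_deriv ?_
  simp only [Function.comp_apply]
  rw [zpow_sub₀ hz k 2, zpow_neg, zpow_ofNat, div_eq_mul_inv]
  ring

theorem iteratedDeriv_pow_mul_comp_mobius (hdet : a * d - b * c = 1) {s t : Set ℂ}
    (hs : IsOpen s) (ht : IsOpen t) (hu : ∀ z ∈ s, c * z + d ≠ 0)
    (hst : MapsTo (fun z => (a * z + b) / (c * z + d)) s t) {g : ℂ → ℂ}
    (hg : DifferentiableOn ℂ g t) (m : ℕ) :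
    EqOn (iteratedDeriv (m + 1) fun w => (c * w + d) ^ m * g ((a * w + b) / (c * w + d)))
      (fun z => (c * z + d) ^ (-(m + 2 : ℤ)) *
        iteratedDeriv (m + 1) g ((a * z + b) / (c * z + d))) s := by
  have hγ : DifferentiableOn ℂ (fun w => (a * w + b) / (c * w + d)) s := fun w hw =>
    (hasDerivAt_mobius hdet (hu w hw)).differentiableAt.differentiableWithinAt
  induction m with
  | zero =>
    intro z hz
    simpa using (hasDerivAt_zpow_mul_comp_mobius hdet (hu z hz) 0
      (hg.hasDerivAt_iteratedDeriv ht 0 (hst hz))).deriv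
  | succ m ih =>
    intro z hz
    have hφ : ContDiffAt ℂ (m + 1 + 1)
        (fun w => (c * w + d) ^ m * g ((a * w + b) / (c * w + d))) z :=
      (((differentiableOn_id.const_mul c |>.add_const d).pow m).mul
        (hg.comp hγ hst) |>.contDiffOn hs).contDiffAt (hs.mem_nhds hz)
    have hshift (n : ℤ) : (c * z + d) * (c * z + d) ^ (n - 1) = (c * z + d) ^ n := by
      rw [mul_comm, ← zpow_add_one₀ (hu z hz), sub_add_cancel]
    have hsucc := hasDerivAt_zpow_mul_comp_mobius hdet (hu z hz) (-(m + 2))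
      (hg.hasDerivAt_iteratedDeriv ht (m + 1) (hst hz)) |>.deriv
    rw [← (Filter.eventuallyEq_of_mem (hs.mem_nhds hz) ih).deriv_eq, ← iteratedDeriv_succ]
      at hsucc
    calc iteratedDeriv (m + 2) (fun w => (c * w + d) ^ (m + 1) * g ((a * w + b) / (c * w + d))) z
        = iteratedDeriv (m + 2)
            (fun w => (c * w + d) * ((c * w + d) ^ m * g ((a * w + b) / (c * w + d)))) z := by
          simp only [pow_succ', mul_assoc]
      _ = _ := by
          rw [iteratedDeriv_succ_affine_mul c d _ hφ, hsucc, ih hz]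
          push_cast
          rw [show -((m : ℤ) + 1 + 2) = -(m + 2) - 1 by ring,
            show -((m : ℤ) + 2) - 2 = -(m + 2) - 1 - 1 by ring]
          linear_combination
            (-(m + 2 : ℂ) * c * iteratedDeriv (m + 1) g ((a * z + b) / (c * z + d)))
              * hshift (-(m + 2))
            + iteratedDeriv (m + 2) g ((a * z + b) / (c * z + d)) * hshift (-(m + 2) - 1)

end Mobius

section RealMobius

variable {a b c d : ℝ} (hdet : a * d - b * c = 1)
include hdet

theorem ofReal_mul_add_ofReal_ne_zero {z : ℂ} (hz : 0 < z.im) : (c : ℂ) * z + d ≠ 0 := by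
  intro h
  have hc : c = 0 := by
    simpa [hz.ne'] using congrArg Complex.im h
  have hd : d = 0 := by
    simpa [hc] using congrArg Complex.re h
  simp [hc, hd] at hdet

theorem im_mobius_pos {z : ℂ} (hz : 0 < z.im) :
    0 < (((a : ℂ) * z + b) / ((c : ℂ) * z + d)).im := by
  have him : (((a : ℂ) * z + b) / ((c : ℂ) * z + d)).im
      = (a * d - b * c) * z.im / Complex.normSq ((c : ℂ) * z + d) := by
    simp only [div_im, add_im, mul_im, ofReal_re, ofReal_im, zero_mul, add_zero, add_re, mul_re,
      sub_zero, normSq_apply]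
    ring
  rw [him, hdet, one_mul]
  exact div_pos hz (Complex.normSq_pos.2 (ofReal_mul_add_ofReal_ne_zero hdet hz))

end RealMobius

/-- Bol's identity `D^{k-1}(f|_{2-k}γ) = (D^{k-1}f)|_k γ` for
`γ = (a b; c d) ∈ SL₂(ℝ)` and `f` holomorphic on the upper half-plane.
Here `(f|_{2-k}γ)(z) = (cz+d)^{k-2} f(γz)` and
`(g|_k γ)(z) = (cz+d)^{-k} g(γz)`. -/
theorem bol_identity (k : ℕ) (hk : 2 ≤ k) (a b c d : ℝ)
    (hdet : a * d - b * c = 1) (f : ℂ → ℂ)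
    (hf : DifferentiableOn ℂ f {w : ℂ | 0 < w.im}) :
    ∀ z : ℂ, 0 < z.im →
      (2 * π * I) ^ ((1 : ℤ) - k) *
        iteratedDerivWithin (k - 1)
          (fun w : ℂ => ((c : ℂ) * w + d) ^ (k - 2) *
            f (((a : ℂ) * w + b) / ((c : ℂ) * w + d)))
          {w : ℂ | 0 < w.im} z
      = ((c : ℂ) * z + d) ^ (-(k : ℤ)) *
          ((2 * π * I) ^ ((1 : ℤ) - k) *
            iteratedDerivWithin (k - 1) f {w : ℂ | 0 < w.im}
              (((a : ℂ) * z + b) / ((c : ℂ) * z + d))) := by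
  intro z hz
  obtain ⟨m, rfl⟩ := Nat.exists_eq_add_of_le' hk
  have hH : IsOpen {w : ℂ | 0 < w.im} := isOpen_lt continuous_const continuous_im
  have hdetℂ : (a : ℂ) * d - b * c = 1 := by exact_mod_cast hdet
  rw [iteratedDerivWithin_of_isOpen hH hz,
    iteratedDerivWithin_of_isOpen hH (im_mobius_pos hdet hz),
    show m + 2 - 1 = m + 1 by omega, show m + 2 - 2 = m by omega,
    iteratedDeriv_pow_mul_comp_mobius hdetℂ hH hH
      (fun w hw => ofReal_mul_add_ofReal_ne_zero hdet hw) (fun w hw => im_mobius_pos hdet hw) hf m hz]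
  push_cast
  ring
end

section
/- Let ψ₀ be a real, even, primitive Dirichlet character modulo N₀, θ₀(z) = (1/2) + Σ_{n≥1} ψ₀(n) q^{n²} (with the convention ψ₀(0)=1/2 when ψ₀ is trivial) and define ℓ(n) = (-1/√n) when n is a perfect square and 0 otherwise. Then the map sending f = Σ a(n)q^n to Σ a(n) ℓ(n) n^{1/2} q^n sends the theta series θ_{ψ,t}(z) = Σ_{n≥0} ψ(n) q^{tn²} to 0 unless (ψ, t) = (ψ₀, 1), in which case it equals θ₁(z) = Σ_{n≥1} n ψ₁(n) q^{n²} with ψ₁ = ψ₀·(-1/·). -/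
set_option autoImplicit false

open Complex Real

/-- The Kronecker symbol `(-1/n)` for `n ≥ 1`: writing `n = 2^e * n'` with `n'` odd,
it equals `χ₄(n')`. -/
noncomputable def kronNegOne (n : ℕ) : ℂ :=
  ((ZMod.χ₄ ((n / 2 ^ (n.factorization 2) : ℕ) : ZMod 4) : ℤ) : ℂ)

/-- The multiplier `ℓ(n) = (-1/√n)` if `n` is a perfect square, `0` otherwise. -/
noncomputable def ellMap (n : ℕ) : ℂ :=
  if Nat.sqrt n ^ 2 = n then kronNegOne (Nat.sqrt n) else 0

lemma exists_coprime_rep (N₀ : ℕ) [NeZero N₀] (a : (ZMod N₀)ˣ) :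
    ∃ m : ℕ, Nat.Coprime m (4 * N₀ ^ 2) ∧ ((m : ℕ) : ZMod N₀) = (a : ZMod N₀) := by
  set v := (a : ZMod N₀).val with hv
  have hva : ((v : ℕ) : ZMod N₀) = (a : ZMod N₀) := ZMod.natCast_rightInverse _
  have hcop : Nat.Coprime v N₀ := ZMod.val_coe_unit_coprime a
  rcases Nat.even_or_odd v with hev | hod
  · -- v even ⇒ N₀ odd; take m = v + N₀
    have hN : Odd N₀ := by
      rcases Nat.even_or_odd N₀ with hN | hN
      · exfalso
        obtain ⟨x, hx⟩ := hev
        obtain ⟨y, hy⟩ := hN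
        have h2 : (2 : ℕ) ∣ Nat.gcd v N₀ := Nat.dvd_gcd ⟨x, by omega⟩ ⟨y, by omega⟩
        rw [hcop] at h2
        omega
      · exact hN
    have hmodd : Odd (v + N₀) := hev.add_odd hN
    have hN' : Nat.Coprime (v + N₀) N₀ := Nat.coprime_add_self_left.mpr hcop
    have h4 : Nat.Coprime (v + N₀) 4 := by
      have h2 : Nat.Coprime (v + N₀) 2 := Nat.coprime_two_right.mpr hmodd
      simpa [show (4:ℕ) = 2 ^ 2 by norm_num] using h2.pow_right 2
    refine ⟨v + N₀, h4.mul_right (hN'.pow_right 2), ?_⟩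
    push_cast
    rw [ZMod.natCast_self, add_zero, hva]
  · have h4 : Nat.Coprime v 4 := by
      have h2 : Nat.Coprime v 2 := Nat.coprime_two_right.mpr hod
      simpa [show (4:ℕ) = 2 ^ 2 by norm_num] using h2.pow_right 2
    exact ⟨v, h4.mul_right (hcop.pow_right 2), hva⟩

lemma key_square (N₀ r t : ℕ) [NeZero N₀] [NeZero r]
    (ψ₀ : DirichletCharacter ℂ N₀) (ψ : DirichletCharacter ℂ r)
    (hprim₀ : ψ₀.IsPrimitive)
    (hdvd : 4 * r ^ 2 * t ∣ 4 * N₀ ^ 2)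
    (hcompat : ∀ m : ℕ, Nat.Coprime m (4 * N₀ ^ 2) → ψ₀ (m : ZMod N₀) = ψ (m : ZMod r))
    (u : ℕ) (hu : t = u * u) (hu0 : u ≠ 0) :
    t = 1 ∧ ∀ n : ℕ, ψ ((n : ℕ) : ZMod r) = ψ₀ ((n : ℕ) : ZMod N₀) := by
  have h1 : r ^ 2 * t ∣ N₀ ^ 2 := by
    have : 4 * (r ^ 2 * t) ∣ 4 * N₀ ^ 2 := by rwa [← mul_assoc]
    exact (mul_dvd_mul_iff_left (by norm_num : (4:ℕ) ≠ 0)).mp this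
  have h2 : (r * u) ^ 2 ∣ N₀ ^ 2 := by
    rw [mul_pow, hu] at *
    calc r ^ 2 * u ^ 2 = r ^ 2 * (u * u) := by ring
    _ ∣ N₀ ^ 2 := h1
  have hru : r * u ∣ N₀ := (Nat.pow_dvd_pow_iff two_ne_zero).mp h2
  have hr : r ∣ N₀ := (Dvd.intro u rfl).trans hru
  have hfac : ψ₀ = DirichletCharacter.changeLevel hr ψ := by
    apply MulChar.ext
    intro a
    obtain ⟨m, hm, hma⟩ := exists_coprime_rep N₀ a
    have hL : ψ₀ (a : ZMod N₀) = ψ ((m : ℕ) : ZMod r) := by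
      rw [← hma]; exact hcompat m hm
    have hR : (DirichletCharacter.changeLevel hr ψ) (a : ZMod N₀)
        = ψ (ZMod.cast ((a : (ZMod N₀)ˣ) : ZMod N₀)) :=
      DirichletCharacter.changeLevel_eq_cast_of_dvd ψ hr a
    rw [hL, hR, ← hma, ZMod.cast_natCast hr]
  have hft : ψ₀.FactorsThrough r := ⟨hr, ψ, hfac⟩
  have hle : ψ₀.conductor ≤ r := Nat.sInf_le hft
  rw [hprim₀] at hle
  have hNr : r = N₀ := le_antisymm (Nat.le_of_dvd (Nat.pos_of_ne_zero (NeZero.ne N₀)) hr) hle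
  subst hNr
  have hu1 : u = 1 := by
    have := Nat.le_of_dvd (Nat.pos_of_ne_zero (NeZero.ne r)) hru
    have hr1 : 1 ≤ r := Nat.pos_of_ne_zero (NeZero.ne r)
    nlinarith [Nat.one_le_iff_ne_zero.mpr hu0]
  have hψ : ψ₀ = ψ := by
    rw [hfac]
    exact DirichletCharacter.changeLevel_self ψ
  exact ⟨by rw [hu, hu1], fun n => by rw [hψ]⟩

/-- the half-integral Bol-style coefficient map
`Σ a(n) qⁿ ↦ Σ a(n) ℓ(n) n^{1/2} qⁿ` annihilates every basis theta series
`θ_{ψ,t}(z) = Σ_{n≥0} ψ(n) q^{t n²}` of `M_{1/2}(4N₀², ψ₀)` unless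
`(ψ, t) = (ψ₀, 1)`, in which case it produces
`θ₁(z) = Σ_{n≥1} n ψ₀(n)(-1/n) q^{n²}`. -/
theorem delta_half_on_theta_basis (N₀ r t : ℕ) [NeZero N₀] [NeZero r] (ht : 0 < t)
    (ψ₀ : DirichletCharacter ℂ N₀) (ψ : DirichletCharacter ℂ r)
    (hreal₀ : ∀ n : ℕ, (ψ₀ (n : ZMod N₀)).im = 0)
    (heven₀ : ψ₀ (-1) = 1) (hprim₀ : ψ₀.IsPrimitive)
    (heven : ψ (-1) = 1) (hprim : ψ.IsPrimitive)
    (hdvd : 4 * r ^ 2 * t ∣ 4 * N₀ ^ 2)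
    -- for square `t` the character `χ_t` is trivial and `ψ₀(m) = ψ(m)` for
    -- `(m, 4N₀²) = 1`
    (hcompat : IsSquare t → ∀ m : ℕ, Nat.Coprime m (4 * N₀ ^ 2) →
      ψ₀ (m : ZMod N₀) = ψ (m : ZMod r))
    -- the Fourier coefficients of `θ_{ψ,t}`
    (A : ℕ → ℂ)
    (hA : ∀ m : ℕ, A m = if t ∣ m ∧ Nat.sqrt (m / t) ^ 2 = m / t
      then ψ ((Nat.sqrt (m / t) : ℕ) : ZMod r) else 0) :
    (¬ (t = 1 ∧ ∀ n : ℕ, ψ ((n : ℕ) : ZMod r) = ψ₀ ((n : ℕ) : ZMod N₀)) →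
      ∀ z : ℂ, 0 < z.im →
        (∑' m : ℕ, A m * ellMap m * (m : ℂ) ^ ((1 : ℂ) / 2) *
          Complex.exp (2 * π * I * m * z)) = 0) ∧
    ((t = 1 ∧ ∀ n : ℕ, ψ ((n : ℕ) : ZMod r) = ψ₀ ((n : ℕ) : ZMod N₀)) →
      ∀ z : ℂ, 0 < z.im →
        (∑' m : ℕ, A m * ellMap m * (m : ℂ) ^ ((1 : ℂ) / 2) *
          Complex.exp (2 * π * I * m * z))
        = ∑' n : ℕ, (n : ℂ) * ψ₀ ((n : ℕ) : ZMod N₀) * kronNegOne n *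
            Complex.exp (2 * π * I * (n ^ 2 : ℕ) * z)) := by
  constructor
  · intro hNot z hz
    have hzero : ∀ m : ℕ, A m * ellMap m * (m : ℂ) ^ ((1 : ℂ) / 2) *
        Complex.exp (2 * π * I * m * z) = 0 := by
      intro m
      rcases eq_or_ne (ellMap m) 0 with h | h
      · rw [h]; ring
      rcases eq_or_ne (A m) 0 with hAm | hAm
      · rw [hAm]; ring
      exfalso
      have hsq : Nat.sqrt m ^ 2 = m := by
        by_contra hc; exact h (if_neg hc)
      have hcond : t ∣ m ∧ Nat.sqrt (m / t) ^ 2 = m / t := by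
        by_contra hc; exact hAm (by rw [hA m, if_neg hc])
      rcases eq_or_ne m 0 with rfl | hm0
      · apply h
        simp only [ellMap, Nat.sqrt_zero, pow_two, Nat.mul_zero, if_pos rfl, kronNegOne]
        norm_num [ZMod.χ₄]
      · set s := Nat.sqrt m with hs
        set k := Nat.sqrt (m / t) with hk
        have hmtk : m = t * k ^ 2 := by
          conv_lhs => rw [← Nat.mul_div_cancel' hcond.1]
          rw [hcond.2]
        have hk0 : k ≠ 0 := by
          intro h0; rw [h0] at hmtk; simp at hmtk; exact hm0 hmtk
        have hks : k ^ 2 ∣ s ^ 2 := by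
          rw [hsq, hmtk]; exact Dvd.intro_left t rfl
        obtain ⟨u, hsu⟩ := (Nat.pow_dvd_pow_iff two_ne_zero).mp hks
        have htu : t = u * u := by
          have heq : t * k ^ 2 = (u * u) * k ^ 2 := by
            rw [← hmtk, ← hsq, hsu]; ring
          exact Nat.eq_of_mul_eq_mul_right (Nat.pos_of_ne_zero (by positivity)) heq
        have hu0 : u ≠ 0 := by
          intro h0; rw [h0] at htu; omega
        exact hNot (key_square N₀ r t ψ₀ ψ hprim₀ hdvd (hcompat ⟨u, htu⟩) u htu hu0)
    calc (∑' m : ℕ, A m * ellMap m * (m : ℂ) ^ ((1 : ℂ) / 2) *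
          Complex.exp (2 * π * I * m * z)) = ∑' _ : ℕ, (0 : ℂ) := tsum_congr hzero
    _ = 0 := tsum_zero
  · rintro ⟨rfl, hψeq⟩ z hz
    have hinj : Function.Injective (fun n : ℕ => n ^ 2) := Nat.pow_left_injective two_ne_zero
    have hsupp : Function.support (fun m : ℕ => A m * ellMap m * (m : ℂ) ^ ((1 : ℂ) / 2) *
        Complex.exp (2 * π * I * m * z)) ⊆ Set.range (fun n : ℕ => n ^ 2) := by
      intro m hm
      by_contra hc
      apply hm
      have hns : Nat.sqrt m ^ 2 ≠ m := fun hsq => hc ⟨Nat.sqrt m, hsq⟩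
      simp only [ellMap, if_neg hns]
      ring
    have key : (∑' n : ℕ, A (n ^ 2) * ellMap (n ^ 2) * ((n ^ 2 : ℕ) : ℂ) ^ ((1 : ℂ) / 2) *
        Complex.exp (2 * π * I * (n ^ 2 : ℕ) * z))
        = ∑' m : ℕ, A m * ellMap m * (m : ℂ) ^ ((1 : ℂ) / 2) *
          Complex.exp (2 * π * I * m * z) :=
      Function.Injective.tsum_eq hinj hsupp
    rw [← key]
    apply tsum_congr
    intro n
    have h1 : A (n ^ 2) = ψ₀ ((n : ℕ) : ZMod N₀) := by
      rw [hA, if_pos ⟨one_dvd _, by simp [Nat.sqrt_eq']⟩, Nat.div_one, Nat.sqrt_eq', hψeq]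
    have h2 : ellMap (n ^ 2) = kronNegOne n := by
      simp [ellMap, Nat.sqrt_eq']
    have h3 : ((n ^ 2 : ℕ) : ℂ) ^ ((1 : ℂ) / 2) = (n : ℂ) := by
      have hn : (0 : ℝ) ≤ (n : ℝ) := n.cast_nonneg
      rw [show ((n ^ 2 : ℕ) : ℂ) = ((((n : ℝ) ^ (2:ℕ) : ℝ)) : ℂ) by push_cast; ring,
        show ((1 : ℂ) / 2) = ((1 / 2 : ℝ) : ℂ) by norm_num,
        ← Complex.ofReal_cpow (by positivity),
        ← Real.rpow_natCast (n : ℝ) 2, ← Real.rpow_mul hn]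
      norm_num
    rw [h1, h2, h3]
    ring
end

section
/- With the same setup and additionally N₀ = N₁ and the Fricke transformations θ₀|_{1/2}W_N = (iN₀)^{-1/2} τ(ψ₀) θ₀ and θ₁|_{3/2}W_N = -(iN₀)^{-1/2} τ(ψ₁) θ₁ for N = 4N₀², one has δ_a^{k-1}(f|_{2-k}W_N) = -(τ(ψ₀)/τ(ψ₁)) · (δ_a^{k-1}(f))|_k W_N for every smooth f: ℍ → ℂ. -/
set_option autoImplicit false
open Complex Real

/-- Fricke slash action in weight `κ`: `(f|_κ W_M)(z) = f(-1/(Mz)) (√M z)^{-κ}`. -/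
noncomputable def fslash (κ : ℝ) (M : ℕ) (f : ℂ → ℂ) : ℂ → ℂ :=
  fun z => f (-1 / ((M : ℂ) * z)) * (((Real.sqrt M : ℝ) : ℂ) * z) ^ (-(κ : ℂ))

/-- The Gauss sum `τ(ψ) = Σ_{u mod N} ψ(u) e^{2πiu/N}`. -/
noncomputable def gaussSumChar (N : ℕ) [NeZero N] (ψ : DirichletCharacter ℂ N) : ℂ :=
  ∑ u : ZMod N, ψ u * Complex.exp (2 * π * I * (u.val : ℕ) / N)

/-- The Bol-style operator
`δ_a^{k-1}(f) = θ₀^{3a-2} θ₁^{1-a} D^{k-3/2}(θ₀^{1-3a} θ₁^a f)` of weight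
`k = m + 3/2`, where `D^m = (2πi)^{-m} (d/dz)^m`. -/
noncomputable def bolDelta (m : ℕ) (a : ℤ) (θ₀ θ₁ f : ℂ → ℂ) : ℂ → ℂ :=
  fun z => (θ₀ z) ^ (3 * a - 2) * (θ₁ z) ^ (1 - a) *
    ((2 * π * I) ^ (-(m : ℤ)) *
      iteratedDerivWithin m
        (fun w => (θ₀ w) ^ (1 - 3 * a) * (θ₁ w) ^ a * f w)
        {w : ℂ | 0 < w.im} z)

/-!
Bol's identity `D^m (g|_{1-m} W_M) = (D^m g)|_{m+1} W_M` lets the derivative in `δ_a^{k-1}` pass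
through the Fricke involution. The two theta monomials `θ₀^{1-3a} θ₁^a` and `θ₀^{3a-2} θ₁^{1-a}`
both have weight `1/2` under `W_N`, with multipliers whose product is `c₁ / c₀`, where `c₀`, `c₁`
are the Fricke eigenvalues of `θ₀`, `θ₁`. Hence `θ₀^{1-3a} θ₁^a · (f|_{2-k} W_N)` is a constant
multiple of `(θ₀^{1-3a} θ₁^a f)|_{1-m} W_N`, and comparing constants gives the factor `c₀ / c₁`,
which equals `-τ(ψ₀)/τ(ψ₁)`.
-/

lemma hasDerivAt_neg_one_div_mul {M z : ℂ} (hM : M ≠ 0) (hz : z ≠ 0) :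
    HasDerivAt (fun w => -1 / (M * w)) (M * z ^ 2)⁻¹ z := by
  simp_rw [neg_div, one_div]
  exact (((hasDerivAt_id' z).const_mul M).fun_inv (mul_ne_zero hM hz)).fun_neg.congr_deriv
    (by field_simp)

lemma iteratedDerivWithin_succ_id_mul {𝕜 : Type*} [NontriviallyNormedField 𝕜] {s : Set 𝕜}
    (hs : UniqueDiffOn 𝕜 s) {x : 𝕜} (hx : x ∈ s) {ψ : 𝕜 → 𝕜} {n : ℕ}
    (hψ : ContDiffWithinAt 𝕜 (n + 1) ψ s x) :
    iteratedDerivWithin (n + 1) (fun z => z * ψ z) s x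
      = x * iteratedDerivWithin (n + 1) ψ s x + (n + 1) * iteratedDerivWithin n ψ s x := by
  rw [show (fun z => z * ψ z) = id * ψ from rfl,
    iteratedDerivWithin_mul hx hs contDiffWithinAt_id (by exact_mod_cast hψ)]
  rw [Finset.sum_range_succ', Finset.sum_range_succ']
  simp only [iteratedDerivWithin_id hx hs, Nat.add_eq_zero_iff, one_ne_zero, and_false,
    ↓reduceIte, Nat.add_eq_right, mul_zero, zero_mul, Finset.sum_const_zero, zero_add,
    Nat.choose_one_right, Nat.cast_add, Nat.cast_one, mul_one, add_tsub_cancel_right,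
    Nat.choose_zero_right, one_mul, tsub_zero]
  ring

theorem bol_identity_s6 {s : Set ℂ} (hs : IsOpen s) (hs0 : (0 : ℂ) ∉ s) {M : ℂ} (hM : M ≠ 0)
    (hσ : Set.MapsTo (fun z => -1 / (M * z)) s s) {G : ℂ → ℂ} (hG : DifferentiableOn ℂ G s)
    (m : ℕ) :
    Set.EqOn (iteratedDerivWithin m (fun z => G (-1 / (M * z)) * z ^ ((m : ℤ) - 1)) s)
      (fun z => M ^ (-(m : ℤ)) * z ^ (-(m : ℤ) - 1) * iteratedDerivWithin m G s (-1 / (M * z)))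
      s := by
  have hne : ∀ z ∈ s, z ≠ 0 := fun z hz h => hs0 (h ▸ hz)
  -- `z ^ m G(σ z) = z · z ^ (m - 1) G(σ z)`, and Leibniz' rule for a product with `z` has only
  -- two terms.
  induction m with
  | zero =>
    intro z _
    simp [mul_comm]
  | succ m ih =>
    intro z hz
    have hz0 := hne z hz
    have hσz : -1 / (M * z) ∈ s := hσ hz
    set ψ := fun w => G (-1 / (M * w)) * w ^ ((m : ℤ) - 1)
    have hψ : DifferentiableOn ℂ ψ s :=
      (hG.comp (fun w hw => (hasDerivAt_neg_one_div_mul hM (hne w hw)).differentiableAt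
        |>.differentiableWithinAt) hσ).mul
        (differentiableOn_id.zpow (Or.inl hne))
    have hshift : Set.EqOn (fun w => G (-1 / (M * w)) * w ^ (((m + 1 : ℕ) : ℤ) - 1))
        (fun w => w * ψ w) s := fun w hw => by
      simp only [ψ, Nat.cast_add, Nat.cast_one, add_sub_cancel_right]
      rw [zpow_sub_one₀ (hne w hw)]
      field_simp [hne w hw]
    have hGm : HasDerivAt (iteratedDerivWithin m G s)
        (iteratedDerivWithin (m + 1) G s (-1 / (M * z))) (-1 / (M * z)) := by
      rw [iteratedDerivWithin_succ, derivWithin_of_isOpen hs hσz]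
      exact ((hG.contDiffOn hs (n := ⊤)).differentiableOn_iteratedDerivWithin
        (WithTop.coe_lt_top _) hs.uniqueDiffOn |>.differentiableAt (hs.mem_nhds hσz)).hasDerivAt
    have hcomp : HasDerivAt (fun w => iteratedDerivWithin m G s (-1 / (M * w)))
        (iteratedDerivWithin (m + 1) G s (-1 / (M * z)) * (M * z ^ 2)⁻¹) z :=
      HasDerivAt.comp (h := fun w => -1 / (M * w)) z hGm (hasDerivAt_neg_one_div_mul hM hz0)
    have hder := ((hasDerivAt_zpow (-(m : ℤ) - 1) z (Or.inl hz0)).const_mul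
      (M ^ (-(m : ℤ)))).fun_mul hcomp
    rw [iteratedDerivWithin_congr hshift hz, iteratedDerivWithin_succ_id_mul hs.uniqueDiffOn hz
      ((hψ.contDiffOn hs).contDiffWithinAt hz), iteratedDerivWithin_succ (f := ψ),
      derivWithin_congr ih (ih hz), derivWithin_of_isOpen hs hz, hder.deriv, ih hz]
    have hexp : -((m + 1 : ℕ) : ℤ) = -(m : ℤ) - 1 := by push_cast; ring
    simp only [hexp, zpow_sub_one₀ hz0, zpow_sub_one₀ hM]
    push_cast
    field_simp
    ring

lemma inv_zpow_mul_zpow_eq_div_mul {K : Type*} [Field K] {c₀ c₁ : K} (hc₀ : c₀ ≠ 0)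
    (hc₁ : c₁ ≠ 0) (a : ℤ) :
    (c₀ ^ (1 - 3 * a) * c₁ ^ a)⁻¹ = c₀ / c₁ * (c₀ ^ (3 * a - 2) * c₁ ^ (1 - a)) := by
  refine (eq_inv_of_mul_eq_one_left ?_).symm
  calc c₀ / c₁ * (c₀ ^ (3 * a - 2) * c₁ ^ (1 - a)) * (c₀ ^ (1 - 3 * a) * c₁ ^ a)
      = c₀ / c₁ * (c₀ ^ (3 * a - 2 + (1 - 3 * a)) * c₁ ^ (1 - a + a)) := by
        rw [zpow_add₀ hc₀, zpow_add₀ hc₁]; ring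
    _ = 1 := by ring_nf; field_simp

local notation "ℍₒ" => UpperHalfPlane.upperHalfPlaneSet

lemma neg_one_div_natCast_mul_mem_upperHalfPlaneSet {M : ℕ} (hM : 0 < M) {z : ℂ} (hz : z ∈ ℍₒ) :
    -1 / ((M : ℂ) * z) ∈ ℍₒ := by
  have him : 0 < z.im := hz
  have : 0 < normSq z := normSq_pos.2 fun h => by simp [h] at hz
  change 0 < (-1 / ((M : ℂ) * z)).im
  rw [neg_div, neg_im, div_im]
  simp only [mul_im, natCast_re, natCast_im, zero_mul, add_zero, one_im, one_re, zero_div,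
    normSq_mul, normSq_natCast, zero_sub, neg_neg]
  positivity

lemma ne_zero_of_mem_upperHalfPlaneSet {z : ℂ} (hz : z ∈ ℍₒ) : z ≠ 0 :=
  fun h => by simp [h] at hz

section fslash

variable {M : ℕ}

lemma ofReal_sqrt_natCast_ne_zero (hM : 0 < M) : ((Real.sqrt M : ℝ) : ℂ) ≠ 0 :=
  ofReal_ne_zero.2 (Real.sqrt_ne_zero'.2 (by exact_mod_cast hM))

lemma fslash_const_mul (κ : ℝ) (c : ℂ) (f : ℂ → ℂ) :
    fslash κ M (fun w => c * f w) = fun z => c * fslash κ M f z := by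
  funext z
  simp only [fslash, mul_assoc]

lemma fslash_mul_apply (κ κ' : ℝ) (f g : ℂ → ℂ) {z : ℂ} (hM : 0 < M) (hz : z ≠ 0) :
    fslash (κ + κ') M (fun w => f w * g w) z = fslash κ M f z * fslash κ' M g z := by
  simp only [fslash, ofReal_add, neg_add,
    cpow_add _ _ (mul_ne_zero (ofReal_sqrt_natCast_ne_zero hM) hz)]
  ring

lemma fslash_zpow_apply (κ : ℝ) (n : ℤ) (f : ℂ → ℂ) (z : ℂ) :
    fslash (n * κ) M (fun w => f w ^ n) z = fslash κ M f z ^ n := by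
  simp only [fslash, mul_zpow, ← cpow_mul_int]
  push_cast
  ring_nf

lemma fslash_intCast (k : ℤ) (f : ℂ → ℂ) :
    fslash k M f = fun z => ((Real.sqrt M : ℝ) : ℂ) ^ (-k) * (f (-1 / (M * z)) * z ^ (-k)) := by
  funext z
  rw [fslash, show -((k : ℝ) : ℂ) = ((-k : ℤ) : ℂ) by push_cast; ring, cpow_intCast, mul_zpow]
  ring

theorem iteratedDerivWithin_fslash (hM : 0 < M) {g : ℂ → ℂ} (hg : DifferentiableOn ℂ g ℍₒ)
    (m : ℕ) {z : ℂ} (hz : z ∈ ℍₒ) :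
    iteratedDerivWithin m (fslash (1 - m) M g) ℍₒ z
      = fslash (m + 1) M (iteratedDerivWithin m g ℍₒ) z := by
  have hsqrt := ofReal_sqrt_natCast_ne_zero hM
  have hMpow : (M : ℂ) ^ (-(m : ℤ)) = ((Real.sqrt M : ℝ) : ℂ) ^ (-(2 * m : ℤ)) := by
    rw [show -(2 * m : ℤ) = 2 * -(m : ℤ) by ring, zpow_mul, zpow_two, ← ofReal_mul,
      Real.mul_self_sqrt M.cast_nonneg, ofReal_natCast]
  rw [show (1 : ℝ) - m = ((1 - m : ℤ) : ℝ) by push_cast; ring,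
    show (m : ℝ) + 1 = ((m + 1 : ℤ) : ℝ) by push_cast; ring, fslash_intCast, fslash_intCast,
    iteratedDerivWithin_const_mul_field, neg_sub,
    bol_identity_s6 UpperHalfPlane.isOpen_upperHalfPlaneSet (by simp) (by exact_mod_cast hM.ne')
      (fun w hw => neg_one_div_natCast_mul_mem_upperHalfPlaneSet hM hw) hg m hz, hMpow,
    show -((m : ℤ) + 1) = ((m : ℤ) - 1) + -(2 * m) by ring, zpow_add₀ hsqrt,
    show (m : ℤ) - 1 + -(2 * m) = -(m : ℤ) - 1 by ring]
  ring

lemma fslash_apply_ne_zero (hM : 0 < M) (κ : ℝ) {f : ℂ → ℂ} {z : ℂ} (hz : z ≠ 0)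
    (hf : f (-1 / (M * z)) ≠ 0) : fslash κ M f z ≠ 0 :=
  mul_ne_zero hf (cpow_ne_zero_iff.2 (Or.inl (mul_ne_zero (ofReal_sqrt_natCast_ne_zero hM) hz)))

lemma fslash_zpow_mul_zpow_apply (hM : 0 < M) {θ₀ θ₁ : ℂ → ℂ} {κ₀ κ₁ : ℝ} {c₀ c₁ z : ℂ}
    (hz : z ≠ 0) (h₀ : fslash κ₀ M θ₀ z = c₀ * θ₀ z) (h₁ : fslash κ₁ M θ₁ z = c₁ * θ₁ z)
    (p q : ℤ) :
    fslash (p * κ₀ + q * κ₁) M (fun w => θ₀ w ^ p * θ₁ w ^ q) z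
      = c₀ ^ p * c₁ ^ q * (θ₀ z ^ p * θ₁ z ^ q) := by
  rw [fslash_mul_apply _ _ _ _ hM hz, fslash_zpow_apply, fslash_zpow_apply, h₀, h₁, mul_zpow,
    mul_zpow]
  ring

theorem bolDelta_fslash_of_fricke (hM : 0 < M) {θ₀ θ₁ : ℂ → ℂ} {c₀ c₁ : ℂ}
    (hθ₀ne : ∀ z ∈ ℍₒ, θ₀ z ≠ 0) (hθ₁ne : ∀ z ∈ ℍₒ, θ₁ z ≠ 0)
    (hθ₀ : DifferentiableOn ℂ θ₀ ℍₒ) (hθ₁ : DifferentiableOn ℂ θ₁ ℍₒ)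
    (hθ₀W : ∀ z ∈ ℍₒ, fslash (1 / 2) M θ₀ z = c₀ * θ₀ z)
    (hθ₁W : ∀ z ∈ ℍₒ, fslash (3 / 2) M θ₁ z = c₁ * θ₁ z)
    (m : ℕ) (a : ℤ) {f : ℂ → ℂ} (hf : DifferentiableOn ℂ f ℍₒ) {z : ℂ} (hz : z ∈ ℍₒ) :
    bolDelta m a θ₀ θ₁ (fslash (1 / 2 - m) M f) z
      = c₀ / c₁ * fslash (m + 3 / 2) M (bolDelta m a θ₀ θ₁ f) z := by
  have hz0 := ne_zero_of_mem_upperHalfPlaneSet hz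
  have hσz := neg_one_div_natCast_mul_mem_upperHalfPlaneSet hM hz
  have hc₀ : c₀ ≠ 0 := left_ne_zero_of_mul <| hθ₀W z hz ▸
    fslash_apply_ne_zero hM _ hz0 (hθ₀ne _ hσz)
  have hc₁ : c₁ ≠ 0 := left_ne_zero_of_mul <| hθ₁W z hz ▸
    fslash_apply_ne_zero hM _ hz0 (hθ₁ne _ hσz)
  have hweight (p q : ℤ) (hpq : p + 3 * q = 1) (w : ℂ) (hw : w ∈ ℍₒ) :
      fslash (1 / 2) M (fun w => θ₀ w ^ p * θ₁ w ^ q) w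
        = c₀ ^ p * c₁ ^ q * (θ₀ w ^ p * θ₁ w ^ q) := by
    rw [← fslash_zpow_mul_zpow_apply hM (ne_zero_of_mem_upperHalfPlaneSet hw) (hθ₀W w hw)
      (hθ₁W w hw)]
    congr 1
    have : (p : ℝ) + 3 * q = 1 := by exact_mod_cast hpq
    linarith
  set Θ := fun w => θ₀ w ^ (1 - 3 * a) * θ₁ w ^ a
  set μ := c₀ ^ (1 - 3 * a) * c₁ ^ a
  have hμ : μ ≠ 0 := by positivity
  have hinner : Set.EqOn (fun w => Θ w * fslash (1 / 2 - m) M f w)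
      (fun w => μ⁻¹ * fslash (1 - m) M (fun w => Θ w * f w) w) ℍₒ := by
    intro w hw
    beta_reduce
    rw [show (1 : ℝ) - m = 1 / 2 + (1 / 2 - m) by ring,
      fslash_mul_apply _ _ _ _ hM (ne_zero_of_mem_upperHalfPlaneSet hw),
      hweight (1 - 3 * a) a (by ring) w hw]
    simp only [Θ, μ]
    field_simp
  have hΘf : DifferentiableOn ℂ (fun w => Θ w * f w) ℍₒ :=
    ((hθ₀.zpow (Or.inl hθ₀ne)).mul (hθ₁.zpow (Or.inl hθ₁ne))).mul hf
  unfold bolDelta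
  rw [iteratedDerivWithin_congr hinner hz, iteratedDerivWithin_const_mul_field,
    iteratedDerivWithin_fslash hM hΘf m hz, show (m : ℝ) + 3 / 2 = 1 / 2 + (m + 1) by ring,
    fslash_mul_apply _ _ _ _ hM hz0, hweight (3 * a - 2) (1 - a) (by ring) z hz,
    fslash_const_mul, inv_zpow_mul_zpow_eq_div_mul hc₀ hc₁]
  ring

end fslash

theorem bolDelta_fricke_equivariance_general
    (N₀ : ℕ) [NeZero N₀]
    (ψ₀ ψ₁ : DirichletCharacter ℂ N₀)
    (θ₀ θ₁ : ℂ → ℂ)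
    (hθ₀ne : ∀ z : ℂ, 0 < z.im → θ₀ z ≠ 0)
    (hθ₁ne : ∀ z : ℂ, 0 < z.im → θ₁ z ≠ 0)
    (hθ₀hol : DifferentiableOn ℂ θ₀ {w : ℂ | 0 < w.im})
    (hθ₁hol : DifferentiableOn ℂ θ₁ {w : ℂ | 0 < w.im})
    (N : ℕ) (hN : N = 4 * N₀ ^ 2)
    (hθ₀W : ∀ z : ℂ, 0 < z.im →
      fslash (1 / 2) N θ₀ z
        = (Complex.I * (N₀ : ℂ)) ^ (-(1 : ℂ) / 2) * gaussSumChar N₀ ψ₀ * θ₀ z)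
    (hθ₁W : ∀ z : ℂ, 0 < z.im →
      fslash (3 / 2) N θ₁ z
        = -((Complex.I * (N₀ : ℂ)) ^ (-(1 : ℂ) / 2) * gaussSumChar N₀ ψ₁ * θ₁ z))
    (m : ℕ) (a : ℤ) (f : ℂ → ℂ)
    (hf : DifferentiableOn ℂ f {w : ℂ | 0 < w.im}) :
    ∀ z : ℂ, 0 < z.im →
      bolDelta m a θ₀ θ₁ (fslash ((1 : ℝ) / 2 - m) N f) z
        = -(gaussSumChar N₀ ψ₀ / gaussSumChar N₀ ψ₁) *
            fslash ((m : ℝ) + 3 / 2) N (bolDelta m a θ₀ θ₁ f) z := by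
  intro z hz
  have hNpos : 0 < N := by
    have := NeZero.pos N₀
    rw [hN]
    positivity
  have hκ : (Complex.I * (N₀ : ℂ)) ^ (-(1 : ℂ) / 2) ≠ 0 :=
    cpow_ne_zero_iff.2 (Or.inl (mul_ne_zero I_ne_zero (Nat.cast_ne_zero.2 (NeZero.ne N₀))))
  rw [bolDelta_fslash_of_fricke hNpos hθ₀ne hθ₁ne hθ₀hol hθ₁hol hθ₀W
    (fun w hw => (hθ₁W w hw).trans (neg_mul _ _).symm) m a hf hz, div_neg,
    mul_div_mul_left _ _ hκ]

/-- with `N₀ = N₁`, `N = 4N₀²` and the Fricke transformation laws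
`θ₀|_{1/2}W_N = (iN₀)^{-1/2} τ(ψ₀) θ₀`, `θ₁|_{3/2}W_N = -(iN₀)^{-1/2} τ(ψ₁) θ₁`,
one has `δ_a^{k-1}(f|_{2-k}W_N) = -(τ(ψ₀)/τ(ψ₁)) (δ_a^{k-1}f)|_k W_N`
(`k = m + 3/2`). -/
theorem bolDelta_fricke_equivariance
    (N₀ : ℕ) [NeZero N₀]
    (ψ₀ ψ₁ : DirichletCharacter ℂ N₀)
    (hreal₀ : ∀ n : ℤ, (ψ₀ (n : ZMod N₀)).im = 0)
    (heven₀ : ψ₀ (-1) = 1) (hprim₀ : ψ₀.IsPrimitive)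
    (hreal₁ : ∀ n : ℤ, (ψ₁ (n : ZMod N₀)).im = 0)
    (hodd₁ : ψ₁ (-1) = -1) (hprim₁ : ψ₁.IsPrimitive)
    (θ₀ θ₁ : ℂ → ℂ)
    (hθ₀ne : ∀ z : ℂ, 0 < z.im → θ₀ z ≠ 0)
    (hθ₁ne : ∀ z : ℂ, 0 < z.im → θ₁ z ≠ 0)
    (hθ₀hol : DifferentiableOn ℂ θ₀ {w : ℂ | 0 < w.im})
    (hθ₁hol : DifferentiableOn ℂ θ₁ {w : ℂ | 0 < w.im})
    (N : ℕ) (hN : N = 4 * N₀ ^ 2)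
    (hθ₀W : ∀ z : ℂ, 0 < z.im →
      fslash (1 / 2) N θ₀ z
        = (Complex.I * (N₀ : ℂ)) ^ (-(1 : ℂ) / 2) * gaussSumChar N₀ ψ₀ * θ₀ z)
    (hθ₁W : ∀ z : ℂ, 0 < z.im →
      fslash (3 / 2) N θ₁ z
        = -((Complex.I * (N₀ : ℂ)) ^ (-(1 : ℂ) / 2) * gaussSumChar N₀ ψ₁ * θ₁ z))
    (m : ℕ) (a : ℤ) (f : ℂ → ℂ)
    (hf : DifferentiableOn ℂ f {w : ℂ | 0 < w.im}) :
    ∀ z : ℂ, 0 < z.im →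
      bolDelta m a θ₀ θ₁ (fslash ((1 : ℝ) / 2 - m) N f) z
        = -(gaussSumChar N₀ ψ₀ / gaussSumChar N₀ ψ₁) *
            fslash ((m : ℝ) + 3 / 2) N (bolDelta m a θ₀ θ₁ f) z :=
  bolDelta_fricke_equivariance_general N₀ ψ₀ ψ₁ θ₀ θ₁ hθ₀ne hθ₁ne hθ₀hol hθ₁hol N hN hθ₀W hθ₁W m a f
    hf
end
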